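/- arXiv:1402.1395 — 3 statements merged into one kernel-verified Lean document; each statement's English description precedes it below -/
import Mathlib

section
/- Suppose U'(z_c) ≠ 0 and c = U(z_c). Then there exist r > 0 and a holomorphic function η on the disc D(z_c, r) such that η(z_c) = 0, η'(z_c) = 1, and U'(z_c)·η(z)·η'(z)² = U(z) − c for all z ∈ D(z_c, r). -/
/-!
Write `U z - c = U'(z_c) (z - z_c) k z` with `k` holomorphic, `k z_c = 1`, and let `q = √k`.
For `η = (z - z_c) G^{2/3}` one has `η' = G^{-1/3} (G + (2/3)(z - z_c) G')`, hence
`η η'² = (z - z_c) (G + (2/3)(z - z_c) G')²`, so it suffices that `G + (2/3)(z - z_c) G' = q`.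
This Euler-type equation is solved by dividing the `n`-th Taylor coefficient of `q` by `1 + 2n/3`,
which keeps the radius of convergence. Then
`(z - z_c)^{3/2} G(z) = (3/2) ∫_{z_c}^z (w - z_c)^{1/2} q(w) dw`, so `η` is the Langer variable.
-/

open Complex Filter Topology

section PowerSeries

variable {𝕜 F : Type*} [NontriviallyNormedField 𝕜] [NormedAddCommGroup F] [NormedSpace 𝕜 F]
  [CompleteSpace F]

theorem HasFPowerSeriesOnBall.hasSum_sub_smul_deriv {f : 𝕜 → F}
    {p : FormalMultilinearSeries 𝕜 𝕜 F} {x z : 𝕜} {r : ENNReal}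
    (hf : HasFPowerSeriesOnBall f p x r) (hz : z ∈ Metric.eball x r) :
    HasSum (fun n : ℕ => (n : 𝕜) • (z - x) ^ n • p.coeff n) ((z - x) • deriv f z) := by
  have h := (hf.fderiv.hasSum_sub hz).mapL (ContinuousLinearMap.apply 𝕜 F (z - x))
  simp only [ContinuousLinearMap.apply_apply, p.derivSeries_apply_diag, fderiv_eq_smul_deriv] at h
  simp only [FormalMultilinearSeries.apply_eq_pow_smul_coeff, ← Nat.cast_smul_eq_nsmul 𝕜] at h
  rw [← hasSum_nat_add_iff' 1]
  simpa using h

end PowerSeries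

section Euler

variable {F : Type*} [NormedAddCommGroup F] [NormedSpace ℂ F] [CompleteSpace F]

theorem Complex.re_le_norm_natCast_add (a : ℂ) (n : ℕ) :
    a.re ≤ ‖(n : ℂ) + a‖ :=
  (by simp : a.re ≤ ((n : ℂ) + a).re).trans (re_le_norm _)

theorem HasFPowerSeriesOnBall.exists_sub_smul_deriv_add_smul_eq {q : ℂ → F}
    {p : FormalMultilinearSeries ℂ ℂ F} {z₀ : ℂ} {r : ENNReal}
    (hq : HasFPowerSeriesOnBall q p z₀ r) {a : ℂ} (ha : 0 < a.re) :
    ∃ g : ℂ → F, DifferentiableOn ℂ g (Metric.eball z₀ r) ∧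
      ∀ z ∈ Metric.eball z₀ r, (z - z₀) • deriv g z + a • g z = q z := by
  set p' : FormalMultilinearSeries ℂ ℂ F := fun n => ((n : ℂ) + a)⁻¹ • p n
  have hrad : r ≤ p'.radius := by
    refine hq.r_le.trans ?_
    rw [← p.radius_smul_eq (inv_ne_zero (ofReal_ne_zero.mpr ha.ne') : ((a.re : ℂ)⁻¹) ≠ 0)]
    refine FormalMultilinearSeries.radius_le_of_le fun n => ?_
    simp only [p', FormalMultilinearSeries.smul_apply, norm_smul]
    gcongr
    rw [norm_inv, norm_inv, norm_real, Real.norm_of_nonneg ha.le]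
    exact inv_anti₀ ha (re_le_norm_natCast_add a n)
  have hg : HasFPowerSeriesOnBall (fun z => p'.sum (z - z₀)) p' z₀ r := by
    simpa using ((p'.hasFPowerSeriesOnBall (hq.r_pos.trans_le hrad)).comp_sub z₀).mono
      hq.r_pos hrad
  refine ⟨_, hg.differentiableOn, fun z hz => ?_⟩
  refine ((hg.hasSum_sub_smul_deriv hz).add ((hg.hasSum_sub hz).const_smul a)).unique ?_
  convert hq.hasSum_sub hz using 2 with n
  have hna : (n : ℂ) + a ≠ 0 := norm_pos_iff.mp (ha.trans_le (re_le_norm_natCast_add a n))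
  simp only [FormalMultilinearSeries.apply_eq_pow_smul_coeff]
  simp only [p', FormalMultilinearSeries.coeff, smul_apply, smul_smul, ← add_smul]
  congr 1
  field_simp

end Euler

theorem HasDerivAt.sub_mul_cpow_two_thirds {G : ℂ → ℂ} {G' z : ℂ} (hG : HasDerivAt G G' z)
    (hz : G z ∈ slitPlane) (z₀ : ℂ) :
    HasDerivAt (fun w => (w - z₀) * G w ^ (2 / 3 : ℂ))
      (G z ^ (2 / 3 : ℂ) * (G z + 2 / 3 * (z - z₀) * G') / G z) z := by
  have hG0 : G z ≠ 0 := slitPlane_ne_zero hz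
  refine (((hasDerivAt_id' z).sub_const z₀).mul (hG.cpow_const hz)).congr_deriv ?_
  rw [cpow_sub _ _ hG0, cpow_one]
  field_simp

theorem sub_mul_cpow_two_thirds_mul_sq {G : ℂ} (hG : G ≠ 0) (w q : ℂ) :
    w * G ^ (2 / 3 : ℂ) * (G ^ (2 / 3 : ℂ) * q / G) ^ 2 = w * q ^ 2 := by
  have hcube : (G ^ (2 / 3 : ℂ)) ^ 3 = G ^ 2 := by
    rw [← cpow_nat_mul]; norm_num
  field_simp
  linear_combination w * q ^ 2 * hcube

theorem AnalyticAt.exists_sq_eq {k : ℂ → ℂ} {z₀ : ℂ} (hk : AnalyticAt ℂ k z₀) (hk₀ : k z₀ = 1) :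
    ∃ q : ℂ → ℂ, AnalyticAt ℂ q z₀ ∧ q z₀ = 1 ∧ ∀ z, q z ^ 2 = k z :=
  ⟨fun z => k z ^ (2⁻¹ : ℂ), hk.cpow analyticAt_const (by simp [hk₀]), by simp [hk₀],
    fun z => by exact_mod_cast cpow_nat_inv_pow (k z) two_ne_zero⟩

theorem AnalyticAt.exists_sub_eq_deriv_mul_sub_mul {f : ℂ → ℂ} {z₀ : ℂ} (hf : AnalyticAt ℂ f z₀)
    (hf' : deriv f z₀ ≠ 0) :
    ∃ k : ℂ → ℂ, AnalyticAt ℂ k z₀ ∧ k z₀ = 1 ∧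
      ∀ z, f z - f z₀ = deriv f z₀ * (z - z₀) * k z := by
  obtain ⟨p, hp⟩ := hf
  refine ⟨fun z => (deriv f z₀)⁻¹ * dslope f z₀ z,
    analyticAt_const.mul hp.has_fpower_series_dslope_fslope.analyticAt,
    by simp [hf'], fun z => ?_⟩
  rw [← sub_smul_dslope f z₀ z, smul_eq_mul]
  field_simp

theorem AnalyticAt.exists_mul_deriv_sq_eq_sub_mul_sq {q : ℂ → ℂ} {z₀ : ℂ}
    (hq : AnalyticAt ℂ q z₀) (hq₀ : q z₀ = 1) :
    ∃ r : ℝ, 0 < r ∧ ∃ η : ℂ → ℂ, DifferentiableOn ℂ η (Metric.ball z₀ r) ∧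
      η z₀ = 0 ∧ deriv η z₀ = 1 ∧
      ∀ z ∈ Metric.ball z₀ r, η z * deriv η z ^ 2 = (z - z₀) * q z ^ 2 := by
  obtain ⟨p, R, hp⟩ := hq
  obtain ⟨g, hg, hode⟩ := hp.exists_sub_smul_deriv_add_smul_eq (a := 3 / 2) (by norm_num)
  set G : ℂ → ℂ := fun z => 3 / 2 * g z
  have hG : ∀ z ∈ Metric.eball z₀ R, HasDerivAt G (3 / 2 * deriv g z) z := fun z hz =>
    (hg.differentiableAt (Metric.isOpen_eball.mem_nhds hz)).hasDerivAt.const_mul _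
  have hGode : ∀ z ∈ Metric.eball z₀ R, G z + 2 / 3 * (z - z₀) * (3 / 2 * deriv g z) = q z := by
    intro z hz
    linear_combination (hode z hz : _)
  have hz₀ : z₀ ∈ Metric.eball z₀ R := Metric.mem_eball_self hp.r_pos
  have hG₀ : G z₀ = 1 := by simpa [hq₀] using hGode z₀ hz₀
  have hev : ∀ᶠ z in 𝓝 z₀, z ∈ Metric.eball z₀ R ∧ G z ∈ slitPlane :=
    Filter.Eventually.and (Metric.eball_mem_nhds z₀ hp.r_pos) <|
      (hG z₀ hz₀).continuousAt.eventually_mem (isOpen_slitPlane.mem_nhds (by simp [hG₀]))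
  obtain ⟨r, hr, hball⟩ := Metric.eventually_nhds_iff.mp hev
  have hη : ∀ z ∈ Metric.ball z₀ r,
      HasDerivAt (fun w => (w - z₀) * G w ^ (2 / 3 : ℂ)) (G z ^ (2 / 3 : ℂ) * q z / G z) z := by
    intro z hz
    obtain ⟨hzR, hGz⟩ := hball hz
    simpa only [hGode z hzR] using (hG z hzR).sub_mul_cpow_two_thirds hGz z₀
  refine ⟨r, hr, fun w => (w - z₀) * G w ^ (2 / 3 : ℂ),
    fun z hz => (hη z hz).differentiableAt.differentiableWithinAt, by simp, ?_, fun z hz => ?_⟩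
  · rw [(hη z₀ (Metric.mem_ball_self hr)).deriv, hG₀, hq₀]
    simp
  · rw [(hη z hz).deriv]
    exact sub_mul_cpow_two_thirds_mul_sq (slitPlane_ne_zero (hball hz).2) _ _

/-- **Existence of the Langer variable** (Section 4.4): if `U` is holomorphic near
`z_c`, `c = U(z_c)` and `U'(z_c) ≠ 0`, then there is a holomorphic function `η` near
`z_c` with `η(z_c) = 0`, `η'(z_c) = 1`, and `U'(z_c)·η·(η')² = U − c`. -/
theorem langer_variable_exists
    (U : ℂ → ℂ) (zc c : ℂ)
    (hU : ∃ Ω : Set ℂ, IsOpen Ω ∧ zc ∈ Ω ∧ DifferentiableOn ℂ U Ω)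
    (hc : c = U zc) (hU' : deriv U zc ≠ 0) :
    ∃ r : ℝ, 0 < r ∧ ∃ η : ℂ → ℂ,
      DifferentiableOn ℂ η (Metric.ball zc r) ∧
      η zc = 0 ∧ deriv η zc = 1 ∧
      ∀ z ∈ Metric.ball zc r,
        deriv U zc * η z * (deriv η z)^2 = U z - c := by
  obtain ⟨Ω, hΩ, hzΩ, hUΩ⟩ := hU
  obtain ⟨k, hk, hk₀, hUk⟩ :=
    (hUΩ.analyticAt (hΩ.mem_nhds hzΩ)).exists_sub_eq_deriv_mul_sub_mul hU'
  obtain ⟨q, hq, hq₀, hqk⟩ := hk.exists_sq_eq hk₀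
  obtain ⟨r, hr, η, hηd, hη₀, hη₀', hη⟩ := hq.exists_mul_deriv_sq_eq_sub_mul_sq hq₀
  refine ⟨r, hr, η, hηd, hη₀, hη₀', fun z hz => ?_⟩
  rw [mul_assoc, hη z hz, hc, hUk, hqk]
  ring
end

section
/- Let η be holomorphic on a disc D(z_c, r) with η(z_c) = 0, η'(z_c) = 1, and U'(z_c)·η(z)·η'(z)² = U(z) − c on D(z_c, r). Then there exist r' ∈ (0, r] and C > 0 such that for all z with |z − z_c| ≤ r': |η(z) − (z − z_c) − (U''(z_c)/(10·U'(z_c)))·(z − z_c)²| ≤ C·|z − z_c|³. In particular η'(z) = 1 + O(|z − z_c|). -/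
/-!
Differentiating `U - c = U'(z_c) η η'²` twice at `z_c` and using `η(z_c) = 0`, `η'(z_c) = 1`
gives `U''(z_c) = 5 U'(z_c) η''(z_c)`, so the claimed quadratic coefficient is the Taylor
coefficient `η''(z_c) / 2`. Both estimates are then Taylor's theorem for the holomorphic
functions `η` and `η'`, with the big-O constants made uniform on a small closed disc.
-/

open Filter Asymptotics Topology

section Taylor

variable {𝕜 E : Type*} [NontriviallyNormedField 𝕜] [CharZero 𝕜]
  [NormedAddCommGroup E] [NormedSpace 𝕜 E] [CompleteSpace E]

theorem AnalyticAt.isBigO_sub_sum_iteratedDeriv {f : 𝕜 → E} {x : 𝕜} (hf : AnalyticAt 𝕜 f x)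
    (n : ℕ) :
    (fun z => f z - ∑ i ∈ Finset.range n, ((z - x) ^ i / i.factorial) • iteratedDeriv i f x)
      =O[𝓝 x] fun z => (z - x) ^ n := by
  have hg : AnalyticAt 𝕜 (fun w => f (x + w)) 0 := by
    rw [← add_zero x] at hf
    exact hf.comp (analyticAt_const.add analyticAt_id)
  obtain ⟨F, hF, hTaylor⟩ := hg.exists_eventuallyEq_sum_add_pow_mul n
  simp only [iteratedDeriv_comp_const_add, add_zero] at hTaylor
  have hRem : (fun w => f (x + w) - ∑ i ∈ Finset.range n, (w ^ i / i.factorial) •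
      iteratedDeriv i f x) =O[𝓝 0] fun w => w ^ n := by
    have hpow : (fun w : 𝕜 => w ^ n • F w) =O[𝓝 0] fun w => w ^ n • (1 : 𝕜) :=
      (isBigO_refl _ _).smul (hF.continuousAt.tendsto.isBigO_one 𝕜)
    refine hpow.congr' ?_ (by simp)
    filter_upwards [hTaylor] with w hw
    rw [hw, add_sub_cancel_left]
  have hshift : Tendsto (fun z => z - x) (𝓝 x) (𝓝 0) := tendsto_sub_nhds_zero_iff.2 tendsto_id
  simpa [Function.comp_def] using hRem.comp_tendsto hshift

end Taylor

section Langer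

variable {𝕜 : Type*} [NontriviallyNormedField 𝕜] [CompleteSpace 𝕜] {η : 𝕜 → 𝕜} {x : 𝕜}

theorem deriv_mul_deriv_sq_eventuallyEq (hη : AnalyticAt 𝕜 η x) :
    deriv (fun z => η z * deriv η z ^ 2)
      =ᶠ[𝓝 x] fun z => deriv η z ^ 3 + 2 * η z * deriv η z * deriv (deriv η) z := by
  filter_upwards [hη.eventually_analyticAt] with z hz
  have hη' := hz.differentiableAt.hasDerivAt
  have hη'' := hz.deriv.differentiableAt.hasDerivAt
  rw [(hη'.fun_mul (hη''.fun_pow 2)).deriv]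
  ring

theorem iteratedDeriv_two_mul_deriv_sq (hη : AnalyticAt 𝕜 η x) (h0 : η x = 0)
    (h1 : deriv η x = 1) :
    iteratedDeriv 2 (fun z => η z * deriv η z ^ 2) x = 5 * iteratedDeriv 2 η x := by
  have hη' := hη.differentiableAt.hasDerivAt
  have hη'' := hη.deriv.differentiableAt.hasDerivAt
  have hη''' := hη.deriv.deriv.differentiableAt.hasDerivAt
  rw [iteratedDeriv_succ, iteratedDeriv_one, (deriv_mul_deriv_sq_eventuallyEq hη).deriv_eq,
    ((hη''.fun_pow 3).fun_add (((hη'.const_mul 2).fun_mul hη'').fun_mul hη''')).deriv,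
    iteratedDeriv_succ, iteratedDeriv_one, h0, h1]
  ring

theorem iteratedDeriv_two_eq_of_langer {U : 𝕜 → 𝕜} {k c : 𝕜} (hη : AnalyticAt 𝕜 η x)
    (h0 : η x = 0) (h1 : deriv η x = 1)
    (hLanger : ∀ᶠ z in 𝓝 x, k * η z * deriv η z ^ 2 = U z - c) :
    iteratedDeriv 2 U x = 5 * k * iteratedDeriv 2 η x := by
  have hU : U =ᶠ[𝓝 x] fun z => c + k * (η z * deriv η z ^ 2) := by
    filter_upwards [hLanger] with z hz
    rw [← mul_assoc, hz, add_sub_cancel]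
  rw [hU.iteratedDeriv_eq, iteratedDeriv_const_add two_pos, iteratedDeriv_const_mul_field,
    iteratedDeriv_two_mul_deriv_sq hη h0 h1, mul_left_comm, mul_assoc]

end Langer

theorem langer_variable_expansion_general
    (U : ℂ → ℂ) (zc c : ℂ)
    (hU' : deriv U zc ≠ 0)
    (r : ℝ) (hr : 0 < r) (η : ℂ → ℂ)
    (hη : DifferentiableOn ℂ η (Metric.ball zc r))
    (hη0 : η zc = 0) (hη'0 : deriv η zc = 1)
    (hLanger : ∀ z ∈ Metric.ball zc r,
      deriv U zc * η z * (deriv η z)^2 = U z - c) :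
    ∃ r' : ℝ, 0 < r' ∧ r' ≤ r ∧ ∃ C : ℝ, 0 < C ∧
      ∀ z : ℂ, ‖z - zc‖ ≤ r' →
        ‖η z - (z - zc) - (iteratedDeriv 2 U zc / (10 * deriv U zc)) * (z - zc)^2‖
            ≤ C * ‖z - zc‖^3 ∧
        ‖deriv η z - 1‖ ≤ C * ‖z - zc‖ := by
  have hball : Metric.ball zc r ∈ 𝓝 zc := Metric.ball_mem_nhds zc hr
  have hηa : AnalyticAt ℂ η zc := hη.analyticAt hball
  have hU'' : iteratedDeriv 2 U zc = 5 * deriv U zc * iteratedDeriv 2 η zc :=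
    iteratedDeriv_two_eq_of_langer hηa hη0 hη'0 (eventually_of_mem hball hLanger)
  have hcubic : (fun z => η z - (z - zc) - (iteratedDeriv 2 U zc / (10 * deriv U zc)) *
      (z - zc) ^ 2) =O[𝓝 zc] fun z => (z - zc) ^ 3 := by
    refine (hηa.isBigO_sub_sum_iteratedDeriv 3).congr_left fun z => ?_
    simp only [Finset.sum_range_succ, Finset.range_zero, Finset.sum_empty, iteratedDeriv_zero,
      iteratedDeriv_one, hη0, hη'0, hU'']
    field_simp
    ring
  have hlinear : (fun z => deriv η z - 1) =O[𝓝 zc] fun z => z - zc := by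
    simpa only [hη'0] using hηa.deriv.differentiableAt.isBigO_sub
  obtain ⟨C₁, hC₁, hcubic⟩ := hcubic.exists_pos
  obtain ⟨C₂, -, hlinear⟩ := hlinear.exists_pos
  obtain ⟨ε, hε, hbound⟩ := Metric.nhds_basis_closedBall.eventually_iff.1
    ((hcubic.weaken (le_max_left C₁ C₂)).bound.and (hlinear.weaken (le_max_right C₁ C₂)).bound)
  refine ⟨min ε r, lt_min hε hr, min_le_right ε r, max C₁ C₂, lt_max_of_lt_left hC₁,
    fun z hz => ?_⟩
  simpa only [norm_pow] using hbound (mem_closedBall_iff_norm.2 (hz.trans (min_le_left ε r)))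

/-- **Taylor expansion of the Langer variable** (estimate (4.16)): if `η` is the Langer
variable at `z_c`, i.e. `η(z_c) = 0`, `η'(z_c) = 1`, `U'(z_c)·η·(η')² = U − c` near
`z_c`, then `η(z) = (z − z_c) + (U''(z_c)/(10·U'(z_c)))(z − z_c)² + O(|z − z_c|³)`;
in particular `η'(z) = 1 + O(|z − z_c|)`. -/
theorem langer_variable_expansion
    (U : ℂ → ℂ) (zc c : ℂ)
    (hU : ∃ Ω : Set ℂ, IsOpen Ω ∧ zc ∈ Ω ∧ DifferentiableOn ℂ U Ω)
    (hc : c = U zc) (hU' : deriv U zc ≠ 0)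
    (r : ℝ) (hr : 0 < r) (η : ℂ → ℂ)
    (hη : DifferentiableOn ℂ η (Metric.ball zc r))
    (hη0 : η zc = 0) (hη'0 : deriv η zc = 1)
    (hLanger : ∀ z ∈ Metric.ball zc r,
      deriv U zc * η z * (deriv η z)^2 = U z - c) :
    ∃ r' : ℝ, 0 < r' ∧ r' ≤ r ∧ ∃ C : ℝ, 0 < C ∧
      ∀ z : ℂ, ‖z - zc‖ ≤ r' →
        ‖η z - (z - zc) - (iteratedDeriv 2 U zc / (10 * deriv U zc)) * (z - zc)^2‖
            ≤ C * ‖z - zc‖^3 ∧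
        ‖deriv η z - 1‖ ≤ C * ‖z - zc‖ :=
  langer_variable_expansion_general U zc c hU' r hr η hη hη0 hη'0 hLanger
end

section
/- Let η be holomorphic on an open set Ω containing [0,1], with η' nowhere vanishing on Ω and U'(z_c)·η(z)·η'(z)² = U(z) − c on Ω. Let Φ be holomorphic on an open set containing η([0,1]) and f a function on that set with ε·Φ''(ζ) − U'(z_c)·ζ·Φ(ζ) = f(ζ) for all ζ there. Let w(z) := η'(z)^{-1/2}·Φ(η(z)) (a fixed holomorphic branch of the square root) and let φ : [0,1] → ℂ be any C⁴ function with φ''(z) = w(z) on [0,1]. Then for all z ∈ [0,1]: ε·φ''''(z) − (U(z) − c)·φ''(z) = η'(z)^{3/2}·f(η(z)) + ε·(d²/dz²)[η'(z)^{-1/2}]·Φ(η(z)). -/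
/-!
Since `η' = g²`, differentiating `Φ(η z)/g z` twice makes the two terms containing `Φ'∘η`
cancel, leaving `g³·Φ''∘η + (1/g)''·Φ∘η`. Because `φ''` agrees with the restriction of this
holomorphic function to `[0,1]`, the real derivatives of `φ''` there are its complex ones, and
substituting `Φ'' = (f + U'(z_c)·ζ·Φ)/ε` and `U − c = U'(z_c)·η·g⁴` gives the identity.
-/

open Set Complex Filter Topology

noncomputable section

def segment01 : Set ℂ := Complex.ofReal '' Set.Icc (0:ℝ) 1

section IteratedDeriv

variable {𝕜 : Type*} [NontriviallyNormedField 𝕜] {F : Type*} [NormedAddCommGroup F]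
  [NormedSpace 𝕜 F]

theorem iteratedDerivWithin_iteratedDerivWithin (m n : ℕ) (f : 𝕜 → F) (s : Set 𝕜) :
    iteratedDerivWithin m (iteratedDerivWithin n f s) s = iteratedDerivWithin (m + n) f s := by
  have iterate (k : ℕ) : iteratedDerivWithin k f s = (fun g => derivWithin g s)^[k] f :=
    funext fun _ => iteratedDerivWithin_eq_iterate
  rw [iterate n, iterate (m + n), Function.iterate_add_apply]
  exact funext fun _ => iteratedDerivWithin_eq_iterate

theorem iteratedDeriv_two_eq_deriv_deriv (f : 𝕜 → F) :
    iteratedDeriv 2 f = deriv (deriv f) := by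
  rw [iteratedDeriv_succ, iteratedDeriv_one]

variable [CompleteSpace 𝕜] [CompleteSpace F]

theorem AnalyticAt.iteratedDeriv_two_comp {Φ : 𝕜 → F} {η : 𝕜 → 𝕜} {z : 𝕜}
    (hΦ : AnalyticAt 𝕜 Φ (η z)) (hη : AnalyticAt 𝕜 η z) :
    iteratedDeriv 2 (Φ ∘ η) z
      = deriv η z ^ 2 • iteratedDeriv 2 Φ (η z) + iteratedDeriv 2 η z • deriv Φ (η z) := by
  have hderiv : deriv (Φ ∘ η) =ᶠ[𝓝 z] fun w => deriv η w • deriv Φ (η w) := by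
    filter_upwards [hη.eventually_analyticAt,
      hη.continuousAt.eventually hΦ.eventually_analyticAt] with w hηw hΦw
    exact deriv.scomp w hΦw.differentiableAt hηw.differentiableAt
  have hΦ' : HasDerivAt (fun w => deriv Φ (η w)) (deriv η z • deriv (deriv Φ) (η z)) z :=
    hΦ.deriv.differentiableAt.hasDerivAt.scomp z hη.differentiableAt.hasDerivAt
  rw [iteratedDeriv_two_eq_deriv_deriv, hderiv.deriv_eq,
    deriv_fun_smul hη.deriv.differentiableAt hΦ'.differentiableAt, hΦ'.deriv,
    iteratedDeriv_two_eq_deriv_deriv, iteratedDeriv_two_eq_deriv_deriv, smul_smul, pow_two,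
    add_comm]

theorem AnalyticAt.iteratedDeriv_two_comp_div {Φ η g : 𝕜 → 𝕜} {z : 𝕜}
    (hΦ : AnalyticAt 𝕜 Φ (η z)) (hη : AnalyticAt 𝕜 η z) (hg : AnalyticAt 𝕜 g z) (hgz : g z ≠ 0)
    (hηg : deriv η =ᶠ[𝓝 z] fun w => g w ^ 2) :
    iteratedDeriv 2 (fun w => Φ (η w) / g w) z
      = g z ^ 3 * iteratedDeriv 2 Φ (η z) + Φ (η z) * iteratedDeriv 2 (fun w => (g w)⁻¹) z := by
  have hη' : deriv η z = g z ^ 2 := hηg.eq_of_nhds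
  have hη'' : iteratedDeriv 2 η z = 2 * g z * deriv g z := by
    rw [iteratedDeriv_two_eq_deriv_deriv, hηg.deriv_eq, deriv_fun_pow hg.differentiableAt]
    push_cast
    ring
  have hcomp_two : iteratedDeriv 2 (fun w => Φ (η w)) z
      = g z ^ 4 * iteratedDeriv 2 Φ (η z) + 2 * g z * deriv g z * deriv Φ (η z) := by
    rw [← Function.comp_def, hΦ.iteratedDeriv_two_comp hη, hη', hη'', smul_eq_mul, smul_eq_mul]
    ring
  have hcomp_deriv : deriv (fun w => Φ (η w)) z = deriv Φ (η z) * g z ^ 2 := by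
    rw [← hη']
    exact (hΦ.differentiableAt.hasDerivAt.comp z hη.differentiableAt.hasDerivAt).deriv
  have hA : AnalyticAt 𝕜 (fun w => Φ (η w)) z := hΦ.comp hη
  have hB : AnalyticAt 𝕜 (fun w => (g w)⁻¹) z := hg.inv hgz
  simp only [div_eq_mul_inv]
  rw [iteratedDeriv_fun_mul hA.contDiffAt hB.contDiffAt]
  simp only [Finset.sum_range_succ, Finset.range_one, Finset.sum_singleton, Nat.choose_zero_right,
    Nat.choose_succ_self_right, Nat.choose_self, Nat.cast_one, Nat.cast_ofNat, iteratedDeriv_zero,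
    iteratedDeriv_one, one_mul, Nat.reduceAdd, tsub_zero, Nat.add_one_sub_one, tsub_self]
  rw [hcomp_two, hcomp_deriv, deriv_fun_inv'' hg.differentiableAt hgz]
  field_simp
  ring

end IteratedDeriv

theorem iteratedDerivWithin_comp_ofReal {h : ℂ → ℂ} {O : Set ℂ} (hO : IsOpen O)
    (hh : DifferentiableOn ℂ h O) {s : Set ℝ} (hs : UniqueDiffOn ℝ s) (hsO : MapsTo (↑) s O)
    (n : ℕ) {x : ℝ} (hx : x ∈ s) :
    iteratedDerivWithin n (fun t : ℝ => h t) s x = iteratedDeriv n h x := by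
  induction n generalizing h with
  | zero => simp
  | succ n ih =>
    have hderiv : EqOn (derivWithin (fun t : ℝ => h t) s) (fun t : ℝ => deriv h t) s :=
      fun t ht => (hh.differentiableAt (hO.mem_nhds (hsO ht))).hasDerivAt.comp_ofReal
        |>.hasDerivWithinAt.derivWithin (hs t ht)
    rw [iteratedDerivWithin_succ', iteratedDerivWithin_congr hderiv hx, iteratedDeriv_succ']
    exact ih (hh.deriv hO)

theorem langer_transformation_general
    (U : ℂ → ℂ) (zc c : ℂ) (ε : ℂ)
    (Ω : Set ℂ) (hΩ : IsOpen Ω) (hseg : segment01 ⊆ Ω)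
    (η : ℂ → ℂ) (hη : DifferentiableOn ℂ η Ω)
    (hη' : ∀ z ∈ Ω, deriv η z ≠ 0)
    (hLanger : ∀ z ∈ Ω, deriv U zc * η z * (deriv η z)^2 = U z - c)
    (V : Set ℂ) (hV : IsOpen V)
    (hηV : (fun x : ℝ => η (x:ℂ)) '' Set.Icc (0:ℝ) 1 ⊆ V)
    (Φ f : ℂ → ℂ) (hΦ : DifferentiableOn ℂ Φ V)
    (hf : ∀ ζ ∈ V, ε * iteratedDeriv 2 Φ ζ - deriv U zc * ζ * Φ ζ = f ζ)
    (g : ℂ → ℂ) (hg : DifferentiableOn ℂ g Ω)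
    (hg2 : ∀ z ∈ Ω, g z ^ 2 = deriv η z)
    (φ : ℝ → ℂ)
    (hφ'' : ∀ z ∈ Set.Icc (0:ℝ) 1,
      iteratedDerivWithin 2 φ (Set.Icc (0:ℝ) 1) z = Φ (η (z:ℂ)) / g (z:ℂ)) :
    ∀ z ∈ Set.Icc (0:ℝ) 1,
      ε * iteratedDerivWithin 4 φ (Set.Icc (0:ℝ) 1) z
          - (U (z:ℂ) - c) * iteratedDerivWithin 2 φ (Set.Icc (0:ℝ) 1) z
        = g (z:ℂ) ^ 3 * f (η (z:ℂ))
          + ε * iteratedDeriv 2 (fun w : ℂ => (g w)⁻¹) (z:ℂ) * Φ (η (z:ℂ)) := by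
  intro x hx
  set O := Ω ∩ η ⁻¹' V
  have hO : IsOpen O := hη.continuousOn.isOpen_inter_preimage hΩ hV
  have hsO : MapsTo (↑) (Icc (0:ℝ) 1) O := fun t ht => ⟨hseg ⟨t, ht, rfl⟩, hηV ⟨t, ht, rfl⟩⟩
  obtain ⟨hxΩ, hxV⟩ := hsO hx
  have hg0 : ∀ z ∈ Ω, g z ≠ 0 := fun z hz h0 =>
    hη' z hz (by rw [← hg2 z hz, h0, zero_pow two_ne_zero])
  have hW : DifferentiableOn ℂ (fun w => Φ (η w) / g w) O :=
    (hΦ.comp (hη.mono inter_subset_left) fun _ hz => hz.2).div (hg.mono inter_subset_left)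
      fun z hz => hg0 z hz.1
  have hfourth : iteratedDerivWithin 4 φ (Icc 0 1) x
      = g x ^ 3 * iteratedDeriv 2 Φ (η x) + Φ (η x) * iteratedDeriv 2 (fun w => (g w)⁻¹) x := by
    rw [← iteratedDerivWithin_iteratedDerivWithin 2 2, iteratedDerivWithin_congr hφ'' hx,
      iteratedDerivWithin_comp_ofReal hO hW uniqueDiffOn_Icc_zero_one hsO 2 hx]
    exact (hΦ.analyticAt (hV.mem_nhds hxV)).iteratedDeriv_two_comp_div
      (hη.analyticAt (hΩ.mem_nhds hxΩ)) (hg.analyticAt (hΩ.mem_nhds hxΩ)) (hg0 _ hxΩ)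
      (eventually_of_mem (hΩ.mem_nhds hxΩ) fun w hw => (hg2 w hw).symm)
  rw [hfourth, hφ'' x hx, ← hf _ hxV, ← hLanger _ hxΩ, ← hg2 _ hxΩ]
  field_simp [hg0 _ hxΩ]
  ring

/-- **The Langer transformation** (Lemma 4.2): if `η` is the Langer variable
(`U'(z_c)·η·(η')² = U − c`, `η'` nonvanishing), `g` is a holomorphic branch of
`(η')^{1/2}`, `Φ` solves `ε·Φ'' − U'(z_c)·ζ·Φ = f`, and `φ` is `C⁴` on `[0,1]` with
`φ'' = (η')^{-1/2}·Φ∘η`, then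
`ε·φ'''' − (U − c)·φ'' = (η')^{3/2}·f∘η + ε·((η')^{-1/2})''·Φ∘η` on `[0,1]`. -/
theorem langer_transformation
    (U : ℂ → ℂ) (zc c : ℂ) (ε : ℂ)
    (hc : c = U zc) (hU' : deriv U zc ≠ 0)
    (Ω : Set ℂ) (hΩ : IsOpen Ω) (hseg : segment01 ⊆ Ω)
    (hU : DifferentiableOn ℂ U Ω)
    (η : ℂ → ℂ) (hη : DifferentiableOn ℂ η Ω)
    (hη' : ∀ z ∈ Ω, deriv η z ≠ 0)
    (hLanger : ∀ z ∈ Ω, deriv U zc * η z * (deriv η z)^2 = U z - c)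
    (V : Set ℂ) (hV : IsOpen V)
    (hηV : (fun x : ℝ => η (x:ℂ)) '' Set.Icc (0:ℝ) 1 ⊆ V)
    (Φ f : ℂ → ℂ) (hΦ : DifferentiableOn ℂ Φ V)
    (hf : ∀ ζ ∈ V, ε * iteratedDeriv 2 Φ ζ - deriv U zc * ζ * Φ ζ = f ζ)
    (g : ℂ → ℂ) (hg : DifferentiableOn ℂ g Ω)
    (hg2 : ∀ z ∈ Ω, g z ^ 2 = deriv η z)
    (φ : ℝ → ℂ) (hφ : ContDiffOn ℝ 4 φ (Set.Icc (0:ℝ) 1))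
    (hφ'' : ∀ z ∈ Set.Icc (0:ℝ) 1,
      iteratedDerivWithin 2 φ (Set.Icc (0:ℝ) 1) z = Φ (η (z:ℂ)) / g (z:ℂ)) :
    ∀ z ∈ Set.Icc (0:ℝ) 1,
      ε * iteratedDerivWithin 4 φ (Set.Icc (0:ℝ) 1) z
          - (U (z:ℂ) - c) * iteratedDerivWithin 2 φ (Set.Icc (0:ℝ) 1) z
        = g (z:ℂ) ^ 3 * f (η (z:ℂ))
          + ε * iteratedDeriv 2 (fun w : ℂ => (g w)⁻¹) (z:ℂ) * Φ (η (z:ℂ)) :=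
  langer_transformation_general U zc c ε Ω hΩ hseg η hη hη' hLanger V hV hηV Φ f hΦ hf g hg hg2 φ
    hφ''

end
end
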